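/- Let S ⊆ ℝⁿ determine a cube tiling of ℝⁿ, let k ∈ {1,…,n}, let α ∈ ℝ, and set V = {v ∈ S : v_k − α ∈ ℤ}. Then for every integer m, the set U = (V − m·e_k) ∪ (S \ V) determines a cube tiling of ℝⁿ, where e_k is the k-th standard basis vector. -/

import Mathlib

/-- The half-open unit cube `[0,1)ⁿ` translated by `t`. -/
def Cube {n : ℕ} (t : Fin n → ℝ) : Set (Fin n → ℝ) :=
  {x | ∀ j, t j ≤ x j ∧ x j < t j + 1}

/-- `T` determines a cube tiling of `ℝⁿ`: the cubes `[0,1)ⁿ + t`, `t ∈ T`,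
are pairwise disjoint and their union is all of `ℝⁿ`. -/
def IsCubeTiling {n : ℕ} (T : Set (Fin n → ℝ)) : Prop :=
  (∀ s ∈ T, ∀ t ∈ T, s ≠ t → Disjoint (Cube s) (Cube t)) ∧
  (⋃ t ∈ T, Cube t) = Set.univ

/-- `T ⊆ ℝ` determines a tiling of `ℝ` by unit intervals `[0,1) + t`. -/
def IsCubeTiling1 (T : Set ℝ) : Prop :=
  (∀ s ∈ T, ∀ t ∈ T, s ≠ t → Disjoint (Set.Ico s (s + 1)) (Set.Ico t (t + 1))) ∧
  (⋃ t ∈ T, Set.Ico t (t + 1)) = Set.univ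

/-- The tiling determined by `T` contains a column: there are `s ∈ ℝⁿ` and a
standard basis vector `eᵢ` such that `s + k·eᵢ ∈ T` for every `k ∈ ℤ`. -/
def ContainsColumn {n : ℕ} (T : Set (Fin n → ℝ)) : Prop :=
  ∃ s : Fin n → ℝ, ∃ i : Fin n, ∀ k : ℤ, (s + (k : ℝ) • (Pi.single i 1 : Fin n → ℝ)) ∈ T

/-- A natural code of `ℝⁿ`: each `ε j : ℝ → ℕ⁺` restricts to a bijection from
every coset `x + ℤ` onto the positive integers. -/
def IsNaturalCode {n : ℕ} (ε : Fin n → ℝ → ℕ+) : Prop :=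
  ∀ j : Fin n, ∀ x : ℝ, Set.BijOn (ε j) {y : ℝ | ∃ m : ℤ, y = x + m} Set.univ

/-!
The cubes of a cube tiling that meet a line `x + ℝ eₖ` have `k`-th coordinates forming a tiling
of `ℝ` by unit intervals, so these coordinates differ by integers. Hence along each such line
either all cubes meeting it lie in `V` or none does. Translating by a multiple of `eₖ` maps
each such line to itself, so it moves the cubes of `V` only among their own lines, where
they still tile.
-/

open Set

namespace IsCubeTiling1

variable {T : Set ℝ}

lemma exists_mem_Ico (hT : IsCubeTiling1 T) (x : ℝ) : ∃ t ∈ T, x ∈ Ico t (t + 1) := by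
  have hx : x ∈ ⋃ t ∈ T, Ico t (t + 1) := hT.2 ▸ mem_univ x
  simpa only [mem_iUnion₂, exists_prop] using hx

lemma eq_of_mem_Ico (hT : IsCubeTiling1 T) {s t x : ℝ} (hs : s ∈ T) (ht : t ∈ T)
    (hxs : x ∈ Ico s (s + 1)) (hxt : x ∈ Ico t (t + 1)) : s = t := by
  by_contra hne
  exact disjoint_left.mp (hT.1 s hs t ht hne) hxs hxt

lemma add_one_mem (hT : IsCubeTiling1 T) {s : ℝ} (hs : s ∈ T) : s + 1 ∈ T := by
  obtain ⟨t, ht, hst, hst'⟩ := hT.exists_mem_Ico (s + 1)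
  rcases hst.eq_or_lt with rfl | hlt
  · exact ht
  · have := hT.eq_of_mem_Ico hs ht ⟨by linarith, hlt⟩ ⟨le_rfl, by linarith⟩
    linarith

lemma add_nat_mem (hT : IsCubeTiling1 T) {s : ℝ} (hs : s ∈ T) (N : ℕ) : s + N ∈ T := by
  induction N with
  | zero => simpa using hs
  | succ N ih => simpa [add_assoc] using hT.add_one_mem ih

lemma exists_int_sub_eq (hT : IsCubeTiling1 T) {s t : ℝ} (hs : s ∈ T) (ht : t ∈ T) :
    ∃ z : ℤ, t - s = z := by
  wlog hst : s ≤ t generalizing s t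
  · obtain ⟨z, hz⟩ := this ht hs (le_of_not_ge hst)
    exact ⟨-z, by push_cast; linarith⟩
  have hN := hT.add_nat_mem hs ⌊t - s⌋₊
  have := hT.eq_of_mem_Ico hN ht
    ⟨by linarith [Nat.floor_le (sub_nonneg.mpr hst)],
      by linarith [Nat.lt_floor_add_one (t - s)]⟩
    ⟨le_rfl, by linarith⟩
  exact ⟨⌊t - s⌋₊, by push_cast; linarith⟩

end IsCubeTiling1

section

variable {n : ℕ}

def CubeMeetsLine (k : Fin n) (x s : Fin n → ℝ) : Prop :=
  ∀ j, j ≠ k → s j ≤ x j ∧ x j < s j + 1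

lemma cubeMeetsLine_of_mem_cube {k : Fin n} {x s : Fin n → ℝ} (h : x ∈ Cube s) :
    CubeMeetsLine k x s :=
  fun j _ => h j

lemma cubeMeetsLine_of_add_mem_cube {k : Fin n} {x s : Fin n → ℝ} (c : ℝ)
    (h : x + c • Pi.single k 1 ∈ Cube s) : CubeMeetsLine k x s := fun j hj => by
  simpa [Pi.single_eq_of_ne hj] using h j

lemma mem_cube_sub_iff {x v w : Fin n → ℝ} : x ∈ Cube (v - w) ↔ x + w ∈ Cube v := by
  simp only [Cube, mem_ofPred_eq, Pi.sub_apply, Pi.add_apply, sub_le_iff_le_add,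
    sub_add_eq_add_sub, lt_sub_iff_add_lt]

lemma update_mem_cube_iff {k : Fin n} {x s : Fin n → ℝ} {y : ℝ} :
    Function.update x k y ∈ Cube s ↔ y ∈ Ico (s k) (s k + 1) ∧ CubeMeetsLine k x s := by
  constructor
  · intro h
    exact ⟨by simpa using h k, fun j hj => by simpa [hj] using h j⟩
  · rintro ⟨hy, hx⟩ j
    rcases eq_or_ne j k with rfl | hj
    · simpa using hy
    · simpa [hj] using hx j hj

namespace IsCubeTiling

variable {S : Set (Fin n → ℝ)}

lemma exists_mem_cube (hS : IsCubeTiling S) (x : Fin n → ℝ) : ∃ s ∈ S, x ∈ Cube s := by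
  have hx : x ∈ ⋃ s ∈ S, Cube s := hS.2 ▸ mem_univ x
  simpa only [mem_iUnion₂, exists_prop] using hx

lemma isCubeTiling1_slice (hS : IsCubeTiling S) (k : Fin n) (x : Fin n → ℝ) :
    IsCubeTiling1 ((fun s => s k) '' {s ∈ S | CubeMeetsLine k x s}) := by
  constructor
  · rintro _ ⟨s, ⟨hs, hsx⟩, rfl⟩ _ ⟨t, ⟨ht, htx⟩, rfl⟩ hne
    refine disjoint_left.mpr fun y hys hyt => ?_
    exact disjoint_left.mp (hS.1 s hs t ht (by rintro rfl; exact hne rfl))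
      (update_mem_cube_iff.mpr ⟨hys, hsx⟩) (update_mem_cube_iff.mpr ⟨hyt, htx⟩)
  · refine eq_univ_of_forall fun y => mem_iUnion₂.mpr ?_
    obtain ⟨s, hs, hys⟩ := hS.exists_mem_cube (Function.update x k y)
    obtain ⟨hy, hsx⟩ := update_mem_cube_iff.mp hys
    exact ⟨s k, ⟨s, ⟨hs, hsx⟩, rfl⟩, hy⟩

lemma exists_int_sub_eq_of_cubeMeetsLine (hS : IsCubeTiling S) {k : Fin n} {x s t : Fin n → ℝ}
    (hs : s ∈ S) (ht : t ∈ S) (hsx : CubeMeetsLine k x s) (htx : CubeMeetsLine k x t) :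
    ∃ z : ℤ, t k - s k = z :=
  (hS.isCubeTiling1_slice k x).exists_int_sub_eq
    ⟨s, ⟨hs, hsx⟩, rfl⟩ ⟨t, ⟨ht, htx⟩, rfl⟩

theorem image_sub_union_diff (hS : IsCubeTiling S) {V : Set (Fin n → ℝ)} (hVS : V ⊆ S)
    (k : Fin n) (c : ℝ)
    (hV : ∀ x, ∀ s ∈ V, ∀ t ∈ S,
      CubeMeetsLine k x s → CubeMeetsLine k x t → t ∈ V) :
    IsCubeTiling ((fun v => v - c • Pi.single k 1) '' V ∪ (S \ V)) := by
  constructor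
  · rintro a (⟨s, hs, rfl⟩ | ⟨ha, haV⟩) b (⟨t, ht, rfl⟩ | ⟨hb, hbV⟩) hab <;>
      refine disjoint_left.mpr fun x hxa hxb => ?_
    · rw [mem_cube_sub_iff] at hxa hxb
      exact disjoint_left.mp (hS.1 s (hVS hs) t (hVS ht) (by rintro rfl; exact hab rfl)) hxa hxb
    · exact hbV (hV x s hs b hb (cubeMeetsLine_of_add_mem_cube c (mem_cube_sub_iff.mp hxa))
        (cubeMeetsLine_of_mem_cube hxb))
    · exact haV (hV x t ht a ha (cubeMeetsLine_of_add_mem_cube c (mem_cube_sub_iff.mp hxb))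
        (cubeMeetsLine_of_mem_cube hxa))
    · exact disjoint_left.mp (hS.1 a ha b hb hab) hxa hxb
  · refine eq_univ_of_forall fun x => mem_iUnion₂.mpr ?_
    obtain ⟨s, hs, hxs⟩ := hS.exists_mem_cube x
    by_cases hsV : s ∈ V
    · obtain ⟨t, ht, hxt⟩ := hS.exists_mem_cube (x + c • Pi.single k 1)
      have htV := hV x s hsV t ht (cubeMeetsLine_of_mem_cube hxs)
        (cubeMeetsLine_of_add_mem_cube c hxt)
      exact ⟨_, Or.inl ⟨t, htV, rfl⟩, mem_cube_sub_iff.mpr hxt⟩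
    · exact ⟨s, Or.inr ⟨hs, hsV⟩, hxs⟩

end IsCubeTiling

end

/-- Shifting the cubes of a congruence class `V = {v ∈ S : v k − α ∈ ℤ}` by an
integer multiple of `e_k` again yields a cube tiling. -/
theorem shift_congruence_class_tiling {n : ℕ} (S : Set (Fin n → ℝ))
    (hS : IsCubeTiling S) (k : Fin n) (α : ℝ) (m : ℤ) :
    IsCubeTiling
      (((fun v : Fin n → ℝ => v - (m : ℝ) • (Pi.single k 1 : Fin n → ℝ)) ''
          {v ∈ S | ∃ z : ℤ, v k - α = z}) ∪
        (S \ {v ∈ S | ∃ z : ℤ, v k - α = z})) := by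
  refine hS.image_sub_union_diff (fun v hv => hv.1) k m ?_
  rintro x s ⟨hs, z, hz⟩ t ht hsx htx
  obtain ⟨w, hw⟩ := hS.exists_int_sub_eq_of_cubeMeetsLine hs ht hsx htx
  exact ⟨ht, z + w, by push_cast; linarith⟩
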